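/- Every yes-instance of Dyck-2 reachability has a walk scheme. -/

import Mathlib

/-- The four-letter alphabet of Dyck-2: two kinds of opening and closing brackets. -/
inductive Sig2 : Type
  | o1 | c1 | o2 | c2
deriving DecidableEq

/-- The Dyck-2 language: the smallest language containing ε and closed under
concatenation and wrapping in either kind of matching brackets. -/
inductive IsDyck : List Sig2 → Prop
  | nil : IsDyck []
  | append {u v : List Sig2} : IsDyck u → IsDyck v → IsDyck (u ++ v)
  | br1 {u : List Sig2} : IsDyck u → IsDyck (Sig2.o1 :: u ++ [Sig2.c1])
  | br2 {u : List Sig2} : IsDyck u → IsDyck (Sig2.o2 :: u ++ [Sig2.c2])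

/-- `IsWalk E u v p` : `p` is a walk from `u` to `v` in the graph with edge set `E`. -/
def IsWalk {V : Type} (E : Set (V × V)) : V → V → List (V × V) → Prop
  | u, v, [] => u = v
  | u, v, e :: p => e ∈ E ∧ e.1 = u ∧ IsWalk E e.2 v p

/-- A walk is valid if its labels form a Dyck-2 word. -/
def IsValidWalk {V : Type} (E : Set (V × V)) (lab : V × V → Sig2) (u v : V)
    (p : List (V × V)) : Prop :=
  IsWalk E u v p ∧ IsDyck (p.map lab)

/-- Right-hand sides of productions of a walk scheme (for a nonterminal `⟨u,v⟩`):
`split w` is `⟨u,v⟩ → ⟨u,w⟩⟨w,v⟩`, `wrap x y` is `⟨u,v⟩ → (u,x) ⟨x,y⟩ (y,v)`,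
and `eps` is `⟨u,u⟩ → ε`. -/
inductive WSRhs (V : Type) : Type
  | split (w : V)
  | wrap (x y : V)
  | eps

/-- The edge relation of the dependency graph on nonterminals:
`q` occurs on the right-hand side of the (unique) production of `p ∈ N`. -/
def WSChild {V : Type} (N : Set (V × V)) (prod : V × V → WSRhs V)
    (p q : V × V) : Prop :=
  p ∈ N ∧ match prod p with
    | .split w => q = (p.1, w) ∨ q = (w, p.2)
    | .wrap x y => q = (x, y)
    | .eps => False

/-- A walk scheme for an instance `(G, lab, s, t)` of Dyck-2 reachability:
a context-free grammar with terminal symbols the edges, nonterminals `N ⊆ V × V`,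
axiom `⟨s,t⟩`, exactly one production per nonterminal of one of the three allowed
forms, whose dependency graph on nonterminals is acyclic. -/
structure WalkScheme {V : Type} (E : Set (V × V)) (lab : V × V → Sig2) (s t : V) where
  N : Set (V × V)
  prod : V × V → WSRhs V
  axiom_mem : (s, t) ∈ N
  prod_valid : ∀ u v : V, (u, v) ∈ N →
    match prod (u, v) with
    | .split w => (u, w) ∈ N ∧ (w, v) ∈ N
    | .wrap x y => (u, x) ∈ E ∧ (y, v) ∈ E ∧ (x, y) ∈ N ∧
        ((lab (u, x) = Sig2.o1 ∧ lab (y, v) = Sig2.c1) ∨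
         (lab (u, x) = Sig2.o2 ∧ lab (y, v) = Sig2.c2))
    | .eps => u = v
  acyclic : ∀ p : V × V, ¬ Relation.TransGen (WSChild N prod) p p


lemma dyck_decomp {w : List Sig2} (h : IsDyck w) :
    w = [] ∨
    (∃ a b, w = a ++ b ∧ a ≠ [] ∧ b ≠ [] ∧ IsDyck a ∧ IsDyck b) ∨
    (∃ u o c, w = o :: u ++ [c] ∧ IsDyck u ∧
      ((o = Sig2.o1 ∧ c = Sig2.c1) ∨ (o = Sig2.o2 ∧ c = Sig2.c2))) := by
  induction h with
  | nil => exact Or.inl rfl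
  | @append u v hu hv ihu ihv =>
    rcases ihu with h1 | h1
    · subst h1; simpa using ihv
    · rcases ihv with h2 | h2
      · subst h2; simpa using Or.inr h1
      · refine Or.inr (Or.inl ⟨u, v, rfl, ?_, ?_, hu, hv⟩)
        · rcases h1 with ⟨a,b,rfl,ha,hb,_,_⟩ | ⟨x,o,c,rfl,_,_⟩ <;> simp_all
        · rcases h2 with ⟨a,b,rfl,ha,hb,_,_⟩ | ⟨x,o,c,rfl,_,_⟩ <;> simp_all
  | @br1 u hu _ => exact Or.inr (Or.inr ⟨u, _, _, rfl, hu, Or.inl ⟨rfl, rfl⟩⟩)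
  | @br2 u hu _ => exact Or.inr (Or.inr ⟨u, _, _, rfl, hu, Or.inr ⟨rfl, rfl⟩⟩)

lemma isWalk_append {V : Type} (E : Set (V × V)) (u v : V) (p q : List (V × V)) :
    IsWalk E u v (p ++ q) ↔ ∃ w, IsWalk E u w p ∧ IsWalk E w v q := by
  induction p generalizing u with
  | nil => simp [IsWalk]
  | cons e p ih => simp [IsWalk, ih, and_assoc]

lemma map_split {V : Type} (lab : V × V → Sig2) (p : List (V × V)) (a b : List Sig2)
    (h : p.map lab = a ++ b) :
    ∃ p₁ p₂, p = p₁ ++ p₂ ∧ p₁.map lab = a ∧ p₂.map lab = b := by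
  refine ⟨p.take a.length, p.drop a.length, (List.take_append_drop _ _).symm, ?_, ?_⟩
  · rw [List.map_take, h, List.take_left]
  · rw [List.map_drop, h, List.drop_left]

section
variable {V : Type} (E : Set (V × V)) (lab : V × V → Sig2)

def Reach (u v : V) : Prop := ∃ p, IsValidWalk E lab u v p

noncomputable def wrank (u v : V) : ℕ :=
  sInf {n | ∃ p, IsValidWalk E lab u v p ∧ p.length = n}

lemma wrank_spec {u v : V} (h : Reach E lab u v) :
    ∃ p, IsValidWalk E lab u v p ∧ p.length = wrank E lab u v := by
  have h' : wrank E lab u v ∈ {n | ∃ p, IsValidWalk E lab u v p ∧ p.length = n} := by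
    apply Nat.sInf_mem
    obtain ⟨p, hp⟩ := h
    exact ⟨p.length, p, hp, rfl⟩
  exact h'

lemma wrank_le {u v : V} {p : List (V × V)} (hp : IsValidWalk E lab u v p) :
    wrank E lab u v ≤ p.length :=
  Nat.sInf_le ⟨p, hp, rfl⟩

def Good (u v : V) : WSRhs V → Prop
  | .eps => u = v
  | .split w => Reach E lab u w ∧ Reach E lab w v ∧
      wrank E lab u w < wrank E lab u v ∧ wrank E lab w v < wrank E lab u v
  | .wrap x y => (u, x) ∈ E ∧ (y, v) ∈ E ∧ Reach E lab x y ∧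
      ((lab (u, x) = Sig2.o1 ∧ lab (y, v) = Sig2.c1) ∨
       (lab (u, x) = Sig2.o2 ∧ lab (y, v) = Sig2.c2)) ∧
      wrank E lab x y < wrank E lab u v

lemma good_exists {u v : V} (h : Reach E lab u v) : ∃ r, Good E lab u v r := by
  obtain ⟨p, hp, hlen⟩ := wrank_spec E lab h
  rcases dyck_decomp hp.2 with hnil | ⟨a, b, hab, ha, hb, hda, hdb⟩ |
      ⟨x, o, c, hoc, hdx, hc⟩
  · have : p = [] := by simpa using hnil
    subst this
    exact ⟨.eps, hp.1⟩
  · obtain ⟨p₁, p₂, rfl, h1, h2⟩ := map_split lab p a b hab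
    obtain ⟨w, hw1, hw2⟩ := (isWalk_append E u v p₁ p₂).mp hp.1
    have hp1 : IsValidWalk E lab u w p₁ := ⟨hw1, h1 ▸ hda⟩
    have hp2 : IsValidWalk E lab w v p₂ := ⟨hw2, h2 ▸ hdb⟩
    have hn1 : p₁ ≠ [] := by rintro rfl; simp_all
    have hn2 : p₂ ≠ [] := by rintro rfl; simp_all
    refine ⟨.split w, ⟨p₁, hp1⟩, ⟨p₂, hp2⟩, ?_, ?_⟩
    · calc wrank E lab u w ≤ p₁.length := wrank_le E lab hp1
        _ < p₁.length + p₂.length := by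
            have := List.length_pos_iff.mpr hn2; omega
        _ = wrank E lab u v := by rw [← hlen, List.length_append]
    · calc wrank E lab w v ≤ p₂.length := wrank_le E lab hp2
        _ < p₁.length + p₂.length := by
            have := List.length_pos_iff.mpr hn1; omega
        _ = wrank E lab u v := by rw [← hlen, List.length_append]
  · cases p with
    | nil => simp at hoc
    | cons e rest =>
      rw [List.map_cons] at hoc
      injection hoc with hlabe hrest
      obtain ⟨q, r, rfl, hq, hr⟩ := map_split lab rest x [c] hrest
      obtain ⟨f, rfl⟩ : ∃ f, r = [f] := by
        cases r with
        | nil => simp at hr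
        | cons f r' => cases r' with
          | nil => exact ⟨f, rfl⟩
          | cons g r'' => simp at hr
      have hlabf : lab f = c := by simpa using hr
      obtain ⟨heE, he1, hwk⟩ := hp.1
      obtain ⟨w, hwq, hwf⟩ := (isWalk_append E e.2 v q [f]).mp hwk
      obtain ⟨hfE, hf1, hf2⟩ : f ∈ E ∧ f.1 = w ∧ f.2 = v := by
        simpa [IsWalk] using hwf
      have heq : e = (u, e.2) := by rw [← he1]
      have hfq : f = (f.1, v) := by rw [← hf2]
      have hwq' : IsWalk E e.2 f.1 q := hf1 ▸ hwq
      have hvq : IsValidWalk E lab e.2 f.1 q := ⟨hwq', hq ▸ hdx⟩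
      refine ⟨.wrap e.2 f.1, ?_, ?_, ⟨q, hvq⟩, ?_, ?_⟩
      · exact heq ▸ heE
      · exact hfq ▸ hfE
      · rw [← heq, ← hfq, hlabe, hlabf]
        rcases hc with ⟨rfl, rfl⟩ | ⟨rfl, rfl⟩
        · exact Or.inl ⟨rfl, rfl⟩
        · exact Or.inr ⟨rfl, rfl⟩
      · calc wrank E lab e.2 f.1 ≤ q.length := wrank_le E lab hvq
          _ < (e :: (q ++ [f])).length := by simp
          _ = wrank E lab u v := hlen

open Classical in
noncomputable def prodF : V × V → WSRhs V := fun p =>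
  if h : Reach E lab p.1 p.2 then Classical.choose (good_exists E lab h) else .eps

lemma prodF_good {u v : V} (h : Reach E lab u v) :
    Good E lab u v (prodF E lab (u, v)) := by
  simp only [prodF]
  rw [dif_pos h]
  exact Classical.choose_spec (good_exists E lab h)

end

/-- Every yes-instance of Dyck-2 reachability has a walk scheme. -/
theorem yes_implies_exists_walkScheme
    {V : Type} [Fintype V] (E : Set (V × V)) (lab : V × V → Sig2) (s t : V)
    (hyes : ∃ p : List (V × V), IsValidWalk E lab s t p) :
    Nonempty (WalkScheme E lab s t) := by
  classical
  set N : Set (V × V) := {p | Reach E lab p.1 p.2} with hN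
  have hchild : ∀ p q, WSChild N (prodF E lab) p q →
      wrank E lab q.1 q.2 < wrank E lab p.1 p.2 := by
    rintro ⟨u, v⟩ q ⟨hp, hm⟩
    have hg := prodF_good E lab (hp : Reach E lab u v)
    revert hm
    cases hprod : prodF E lab (u, v) with
    | split w =>
      rw [hprod] at hg
      rintro (rfl | rfl)
      · exact hg.2.2.1
      · exact hg.2.2.2
    | wrap x y =>
      rw [hprod] at hg
      rintro rfl
      exact hg.2.2.2.2
    | eps => rintro ⟨⟩
  refine ⟨⟨N, prodF E lab, hyes, ?_, ?_⟩⟩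
  · intro u v hmem
    have hg := prodF_good E lab (hmem : Reach E lab u v)
    cases hprod : prodF E lab (u, v) with
    | split w =>
      rw [hprod] at hg
      exact ⟨hg.1, hg.2.1⟩
    | wrap x y =>
      rw [hprod] at hg
      exact ⟨hg.1, hg.2.1, hg.2.2.1, hg.2.2.2.1⟩
    | eps =>
      rw [hprod] at hg
      exact hg
  · intro p hcyc
    have : ∀ q, Relation.TransGen (WSChild N (prodF E lab)) p q →
        wrank E lab q.1 q.2 < wrank E lab p.1 p.2 := by
      intro q h
      induction h with
      | single h => exact hchild _ _ h
      | tail _ h ih => exact lt_trans (hchild _ _ h) ih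
    exact lt_irrefl _ (this p hcyc)
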